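/- In the lamplighter group ℤ ≀ ℤ with standard generators a and t, every element is a product of 3 palindromes over {a, t}. -/

import Mathlib

/-- A palindromic word over `X`: a finite list of elements of `X ∪ X⁻¹`
that reads the same forwards and backwards. -/
def IsPalindromicWord {G : Type*} [Group G] (X : Set G) (w : List G) : Prop :=
  (∀ g ∈ w, g ∈ X ∨ g⁻¹ ∈ X) ∧ w.reverse = w

/-- `g` is a product (in order) of the evaluations of `n` palindromic words over `X`. -/
def IsProdOfPalindromes {G : Type*} [Group G] (X : Set G) (n : ℕ) (g : G) : Prop :=
  ∃ ws : List (List G), ws.length = n ∧ (∀ w ∈ ws, IsPalindromicWord X w) ∧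
    (ws.map List.prod).prod = g

/-- The shift automorphism of `⨁_ℤ ℤ` (written multiplicatively): `(n • f) x = f (x - n)`. -/
noncomputable def lampShiftAut (n : ℤ) : Multiplicative (ℤ →₀ ℤ) ≃* Multiplicative (ℤ →₀ ℤ) :=
  AddEquiv.toMultiplicative (Finsupp.domCongr (Equiv.addRight n))

lemma lampShiftAut_apply (n : ℤ) (f : Multiplicative (ℤ →₀ ℤ)) (x : ℤ) :
    Multiplicative.toAdd (lampShiftAut n f) x = Multiplicative.toAdd f (x - n) := by
  simp [lampShiftAut, Finsupp.domCongr_apply, sub_eq_add_neg]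

/-- `ℤ` acting on `⨁_ℤ ℤ` by shifts. -/
noncomputable def lampShift : Multiplicative ℤ →* MulAut (Multiplicative (ℤ →₀ ℤ)) where
  toFun n := lampShiftAut n.toAdd
  map_one' := by
    ext f : 1
    apply (Multiplicative.toAdd).injective
    ext x
    rw [MulAut.one_apply, lampShiftAut_apply]
    norm_num
  map_mul' m n := by
    ext f : 1
    apply (Multiplicative.toAdd).injective
    ext x
    rw [MulAut.mul_apply, lampShiftAut_apply, lampShiftAut_apply, lampShiftAut_apply,
      toAdd_mul]
    ring_nf

/-- The lamplighter group `ℤ ≀ ℤ = (⨁_ℤ ℤ) ⋊ ℤ`. -/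
abbrev Lamplighter := Multiplicative (ℤ →₀ ℤ) ⋊[lampShift] Multiplicative ℤ

/-- The standard generator `a = (Δ₁, 0)` of `ℤ ≀ ℤ`. -/
noncomputable def genA : Lamplighter := ⟨Multiplicative.ofAdd (Finsupp.single 0 1), 1⟩

/-- The standard generator `t = (0, 1)` of `ℤ ≀ ℤ`. -/
noncomputable def genT : Lamplighter := ⟨1, Multiplicative.ofAdd 1⟩

/-!
An element `(f, m)` of `ℤ ≀ ℤ` is the value of a palindrome whenever `f` is symmetric about
`m / 2`: a symmetric pair of lamps `c • (δ x + δ (m - x))` is added by sandwiching between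
`t^x a^c t^(-x)` and its reverse `t^(-x) a^c t^x`, and a single central lamp is `t^k a^c t^k`.
Every `f` is the sum `A + B` of a function symmetric about `0` and one symmetric about `1/2`,
because `δ 0` is symmetric about `0` and
`δ (y + 1) - δ y = (δ (y + 1) + δ (-y)) - (δ y + δ (-y))`.
Hence `(f, n) = (A, 0) · (B, 1) · t^(n - 1)`.
-/

section Palindromes

variable {G : Type*} [Group G] {X : Set G}

def IsPalindromic (X : Set G) (g : G) : Prop :=
  ∃ w : List G, IsPalindromicWord X w ∧ w.prod = g

theorem isPalindromic_zpow {x : G} (hx : x ∈ X) (c : ℤ) : IsPalindromic X (x ^ c) := by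
  obtain ⟨n, rfl | rfl⟩ := Int.eq_nat_or_neg c
  · refine ⟨List.replicate n x, ⟨fun g hg => ?_, List.reverse_replicate⟩, by simp⟩
    rw [List.eq_of_mem_replicate hg]
    exact Or.inl hx
  · refine ⟨List.replicate n x⁻¹, ⟨fun g hg => ?_, List.reverse_replicate⟩, by simp⟩
    rw [List.eq_of_mem_replicate hg, inv_inv]
    exact Or.inr hx

theorem IsPalindromic.sandwich {g h : G} (hg : IsPalindromic X g) (hh : IsPalindromic X h) :
    IsPalindromic X (h * g * h) := by
  obtain ⟨w, ⟨hwX, hw⟩, rfl⟩ := hg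
  obtain ⟨v, ⟨hvX, hv⟩, rfl⟩ := hh
  refine ⟨v ++ w ++ v, ⟨fun x hx => ?_, by simp [hv, hw]⟩, by simp [mul_assoc]⟩
  simp only [List.mem_append] at hx
  rcases hx with (hx | hx) | hx
  exacts [hvX x hx, hwX x hx, hvX x hx]

theorem isProdOfPalindromes_three {g₁ g₂ g₃ : G} (h₁ : IsPalindromic X g₁)
    (h₂ : IsPalindromic X g₂) (h₃ : IsPalindromic X g₃) :
    IsProdOfPalindromes X 3 (g₁ * g₂ * g₃) := by
  obtain ⟨w₁, hw₁, rfl⟩ := h₁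
  obtain ⟨w₂, hw₂, rfl⟩ := h₂
  obtain ⟨w₃, hw₃, rfl⟩ := h₃
  refine ⟨[w₁, w₂, w₃], rfl, ?_, by simp [mul_assoc]⟩
  simp only [List.mem_cons, List.not_mem_nil, or_false]
  rintro w (rfl | rfl | rfl) <;> assumption

end Palindromes

/-- Functions symmetric about `m / 2`. -/
def symmetricAbout (m : ℤ) : AddSubgroup (ℤ →₀ ℤ) where
  carrier := {f | ∀ x, f (m - x) = f x}
  zero_mem' _ := rfl
  add_mem' hf hg x := by simp [hf x, hg x]
  neg_mem' hf x := by simp [hf x]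

theorem single_add_single_mem_symmetricAbout (m x c : ℤ) :
    Finsupp.single x c + Finsupp.single (m - x) c ∈ symmetricAbout m := by
  intro y
  simp only [Finsupp.add_apply, Finsupp.single_apply]
  split_ifs <;> omega

theorem symmetricAbout_zero_sup_symmetricAbout_one :
    symmetricAbout 0 ⊔ symmetricAbout 1 = ⊤ := by
  set D := symmetricAbout 0 ⊔ symmetricAbout 1
  have h₀ : ∀ f ∈ symmetricAbout 0, f ∈ D := fun f hf => AddSubgroup.mem_sup_left hf
  have h₁ : ∀ f ∈ symmetricAbout 1, f ∈ D := fun f hf => AddSubgroup.mem_sup_right hf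
  have hstep : ∀ y : ℤ, Finsupp.single (y + 1) 1 - Finsupp.single y 1 ∈ D := by
    intro y
    have h := sub_mem (h₁ _ (single_add_single_mem_symmetricAbout 1 (y + 1) 1))
      (h₀ _ (single_add_single_mem_symmetricAbout 0 y 1))
    rwa [show (1 : ℤ) - (y + 1) = 0 - y by ring, add_sub_add_right_eq_sub] at h
  have hsingle : ∀ x : ℤ, Finsupp.single x 1 ∈ D := by
    intro x
    induction x using Int.induction_on with
    | zero =>
      refine h₀ _ fun y => ?_
      simp only [Finsupp.single_apply]
      split_ifs <;> omega
    | succ x ih => simpa using add_mem (hstep x) ih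
    | pred x ih => simpa using sub_mem ih (hstep (-x - 1))
  rw [eq_top_iff]
  rintro f -
  induction f using Finsupp.induction_linear with
  | zero => exact zero_mem D
  | add f g hf hg => exact add_mem hf hg
  | single x c => simpa using zsmul_mem (hsingle x) c

namespace Lamplighter

noncomputable def mk (f : ℤ →₀ ℤ) (m : ℤ) : Lamplighter :=
  ⟨Multiplicative.ofAdd f, Multiplicative.ofAdd m⟩

noncomputable def shift (m : ℤ) : (ℤ →₀ ℤ) ≃+ (ℤ →₀ ℤ) :=
  Finsupp.domCongr (Equiv.addRight m)

theorem mk_mul_mk (f g : ℤ →₀ ℤ) (m k : ℤ) :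
    mk f m * mk g k = mk (f + shift m g) (m + k) :=
  rfl

theorem shift_single (m x c : ℤ) : shift m (Finsupp.single x c) = Finsupp.single (x + m) c := by
  simp [shift]

theorem shift_zero_apply (f : ℤ →₀ ℤ) : shift 0 f = f := by
  ext; simp [shift]; rfl

theorem genA_zpow (c : ℤ) : genA ^ c = mk (Finsupp.single 0 c) 0 := by
  change (SemidirectProduct.inl (Multiplicative.ofAdd (Finsupp.single 0 1))) ^ c = _
  rw [← map_zpow, ← ofAdd_zsmul, Finsupp.smul_single_one]
  rfl

theorem genT_zpow (m : ℤ) : genT ^ m = mk 0 m := by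
  change (SemidirectProduct.inr (Multiplicative.ofAdd 1)) ^ m = _
  rw [← map_zpow, ← ofAdd_zsmul, smul_eq_mul, mul_one]
  rfl

theorem genT_zpow_mul_genA_zpow_mul_genT_zpow (x c : ℤ) :
    genT ^ x * genA ^ c * genT ^ (-x) = mk (Finsupp.single x c) 0 := by
  rw [genT_zpow, genT_zpow, genA_zpow, mk_mul_mk, mk_mul_mk]
  simp [shift_single]

theorem isPalindromic_mk_single_zero_zero (c : ℤ) :
    IsPalindromic {genA, genT} (mk (Finsupp.single 0 c) 0) :=
  genA_zpow c ▸ isPalindromic_zpow (by simp) c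

theorem isPalindromic_mk_zero (m : ℤ) : IsPalindromic {genA, genT} (mk 0 m) :=
  genT_zpow m ▸ isPalindromic_zpow (by simp) m

theorem isPalindromic_mk_add_single_add_single {f : ℤ →₀ ℤ} {m : ℤ}
    (hf : IsPalindromic {genA, genT} (mk f m)) (x c : ℤ) :
    IsPalindromic {genA, genT} (mk (f + Finsupp.single x c + Finsupp.single (m - x) c) m) := by
  have h : mk (f + Finsupp.single x c + Finsupp.single (m - x) c) m =
      genT ^ x * (genA ^ c * (genT ^ (-x) * mk f m * genT ^ (-x)) * genA ^ c) * genT ^ x := by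
    calc _ = mk (Finsupp.single x c) 0 * mk f m * mk (Finsupp.single (-x) c) 0 := by
          rw [mk_mul_mk, mk_mul_mk, shift_zero_apply, shift_single, neg_add_eq_sub, add_zero,
            add_comm (Finsupp.single x c) f, zero_add]
      _ = _ := by
          rw [← genT_zpow_mul_genA_zpow_mul_genT_zpow, ← genT_zpow_mul_genA_zpow_mul_genT_zpow,
            neg_neg]
          group
  rw [h]
  exact ((hf.sandwich (isPalindromic_zpow (by simp) _)).sandwich
    (isPalindromic_zpow (by simp) _)).sandwich (isPalindromic_zpow (by simp) _)

theorem isPalindromic_mk_single_two_mul (x c : ℤ) :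
    IsPalindromic {genA, genT} (mk (Finsupp.single x c) (2 * x)) := by
  have h := (isPalindromic_mk_single_zero_zero c).sandwich (isPalindromic_mk_zero x)
  rwa [mk_mul_mk, mk_mul_mk, shift_single, zero_add, zero_add, map_zero, add_zero, add_zero,
    ← two_mul] at h

theorem isPalindromic_mk_of_mem_symmetricAbout {f : ℤ →₀ ℤ} {m : ℤ}
    (hf : f ∈ symmetricAbout m) : IsPalindromic {genA, genT} (mk f m) := by
  induction hn : f.support.card using Nat.strong_induction_on generalizing f with
  | _ n ih =>
  by_cases hpair : ∃ x ∈ f.support, m - x ≠ x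
  · obtain ⟨x, hx, hxm⟩ := hpair
    set g := f - (Finsupp.single x (f x) + Finsupp.single (m - x) (f x)) with hg
    have hgm : g ∈ symmetricAbout m := sub_mem hf (single_add_single_mem_symmetricAbout m x _)
    have hgsupp : g.support ⊆ f.support.erase x := by
      intro y hy
      have hfx := hf x
      simp only [Finsupp.mem_support_iff, Finset.mem_erase, ne_eq, hg, Finsupp.sub_apply,
        Finsupp.add_apply, Finsupp.single_apply] at hy ⊢
      split_ifs at hy <;> grind
    have hcard := (Finset.card_le_card hgsupp).trans_lt (Finset.card_erase_lt_of_mem hx)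
    have := isPalindromic_mk_add_single_add_single (ih _ (hn ▸ hcard) hgm rfl) x (f x)
    rwa [add_assoc, sub_add_cancel] at this
  · push Not at hpair
    rcases f.support.eq_empty_or_nonempty with h | ⟨x, hx⟩
    · rw [Finsupp.support_eq_empty.1 h]
      exact isPalindromic_mk_zero m
    · have hf : f = Finsupp.single x (f x) := by
        ext y
        by_cases hy : y ∈ f.support <;> grind
      rw [hf, show m = 2 * x by grind]
      exact isPalindromic_mk_single_two_mul x (f x)

end Lamplighter

theorem lamplighter_palindromic_width_le_three :
    ∀ g : Lamplighter, IsProdOfPalindromes {genA, genT} 3 g := by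
  rintro ⟨l, r⟩
  obtain ⟨A, hA, B, hB, hAB⟩ := AddSubgroup.mem_sup.1
    (symmetricAbout_zero_sup_symmetricAbout_one ▸ AddSubgroup.mem_top (Multiplicative.toAdd l))
  have hg : (⟨l, r⟩ : Lamplighter) =
      Lamplighter.mk A 0 * Lamplighter.mk B 1 * Lamplighter.mk 0 (Multiplicative.toAdd r - 1) := by
    rw [Lamplighter.mk_mul_mk, Lamplighter.mk_mul_mk, map_zero, add_zero,
      Lamplighter.shift_zero_apply, hAB, zero_add, add_sub_cancel]
    rfl
  rw [hg]
  exact isProdOfPalindromes_three (Lamplighter.isPalindromic_mk_of_mem_symmetricAbout hA)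
    (Lamplighter.isPalindromic_mk_of_mem_symmetricAbout hB) (Lamplighter.isPalindromic_mk_zero _)
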